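/- arXiv:1609.04986 — 2 statements merged into one kernel-verified Lean document; each statement's English description precedes it below -/
import Mathlib

section
/- Let H be a complex Hilbert space, T ∈ L(H), and suppose there exist unit vectors u, v ∈ H with Tv = 0 and ‖T*u‖² > ‖T*²u‖. Then the commutator map Δ_T fails the paranormality inequality at the rank-one operator S = u ⊗ v: specifically ‖Δ_T(S)‖² = ‖T*u‖² and ‖Δ_T²(S)‖ = ‖T*²u‖, so ‖Δ_T(S)‖² > ‖Δ_T²(S)‖·‖S‖. -/
open ContinuousLinearMap

/-- Let `T` be a bounded operator on a complex Hilbert space and `u, v` unit vectors with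
`T v = 0` and `‖T* u‖² > ‖T*² u‖`.  Then the commutator map `Δ_T` fails the paranormality
inequality at the rank-one operator `S = u ⊗ v : x ↦ ⟨x, u⟩ • v`: one has
`‖Δ_T S‖² = ‖T* u‖²`, `‖Δ_T² S‖ = ‖T*² u‖`, and hence `‖Δ_T S‖² > ‖Δ_T² S‖ · ‖S‖`. -/
theorem stmt_14 {H : Type*} [NormedAddCommGroup H] [InnerProductSpace ℂ H] [CompleteSpace H]
    (T : H →L[ℂ] H) (u v : H) (hu : ‖u‖ = 1) (hv : ‖v‖ = 1) (hTv : T v = 0)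
    (hT : ‖adjoint T u‖ ^ 2 > ‖adjoint T (adjoint T u)‖) :
    ‖T ∘L ((innerSL ℂ u).smulRight v) - ((innerSL ℂ u).smulRight v) ∘L T‖ ^ 2
        = ‖adjoint T u‖ ^ 2 ∧
    ‖T ∘L (T ∘L ((innerSL ℂ u).smulRight v) - ((innerSL ℂ u).smulRight v) ∘L T)
        - (T ∘L ((innerSL ℂ u).smulRight v) - ((innerSL ℂ u).smulRight v) ∘L T) ∘L T‖
        = ‖adjoint T (adjoint T u)‖ ∧
    ‖T ∘L ((innerSL ℂ u).smulRight v) - ((innerSL ℂ u).smulRight v) ∘L T‖ ^ 2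
        > ‖T ∘L (T ∘L ((innerSL ℂ u).smulRight v) - ((innerSL ℂ u).smulRight v) ∘L T)
            - (T ∘L ((innerSL ℂ u).smulRight v) - ((innerSL ℂ u).smulRight v) ∘L T) ∘L T‖
          * ‖(innerSL ℂ u).smulRight v‖ := by
  set S : H →L[ℂ] H := (innerSL ℂ u).smulRight v with hS
  have h1 : T ∘L S - S ∘L T = (innerSL ℂ (adjoint T u)).smulRight (-v) := by
    ext x
    simp [hS, hTv, adjoint_inner_left, smul_neg]
  have h2 : T ∘L (T ∘L S - S ∘L T) - (T ∘L S - S ∘L T) ∘L T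
      = (innerSL ℂ (adjoint T (adjoint T u))).smulRight v := by
    ext x
    simp [hS, hTv, adjoint_inner_left, smul_neg]
  have hn1 : ‖T ∘L S - S ∘L T‖ = ‖adjoint T u‖ := by
    rw [h1, norm_smulRight_apply, innerSL_apply_norm, norm_neg, hv, mul_one]
  have hn2 : ‖T ∘L (T ∘L S - S ∘L T) - (T ∘L S - S ∘L T) ∘L T‖
      = ‖adjoint T (adjoint T u)‖ := by
    rw [h2, norm_smulRight_apply, innerSL_apply_norm, hv, mul_one]
  have hnS : ‖S‖ = 1 := by
    rw [hS, norm_smulRight_apply, innerSL_apply_norm, hu, hv, mul_one]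
  refine ⟨by rw [hn1], hn2, ?_⟩
  rw [hn1, hn2, hnS, mul_one]
  exact hT
end

section
/- The scalar multiple cB of the backward shift B on ℓ²(ℕ) induces a commutator map Δ_{cB} : K(ℓ²) → K(ℓ²), S ↦ cBS − ScB, on the compact operators, which is not hypercyclic for any constant c ∈ ℂ. -/
/-!
For `‖t‖ < 1` the weighted sums `ψ_d(V) = ∑ⱼ tʲ V_{j+d,j}` along the `d`-th subdiagonal are
bounded functionals on operators, of norm at most `1 / (1 - ‖t‖)`, and since `(BV)_{ij} = V_{i+1,j}`
and `(VB)_{ij} = V_{i,j-1}`, one has `ψ_d ∘ Δ_{cB} = c (1 - t) ψ_{d+1}`. Choosing `t` with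
`‖c (1 - t)‖ ≤ 1`, the functional `ψ_0` stays bounded by `‖A‖ / (1 - ‖t‖)` along the whole orbit
of `A`, so the orbit keeps distance at least `1` from `r` times the rank-one projection onto the
first coordinate once `r` is large.
-/

open ContinuousLinearMap

open scoped ENNReal

noncomputable section

namespace BackwardShiftCommutator

local notation "ℓ[" q "]" => lp (fun _ : ℕ => ℂ) q

variable {p : ℝ≥0∞} [Fact (1 ≤ p)]

lemma norm_apply_single_le (V : ℓ[p] →L[ℂ] ℓ[p]) (i j : ℕ) :
    ‖V (lp.single p j 1) i‖ ≤ ‖V‖ := by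
  have hp : 0 < p := zero_lt_one.trans_le Fact.out
  calc ‖V (lp.single p j 1) i‖ ≤ ‖V (lp.single p j 1)‖ := lp.norm_apply_le_norm hp.ne' _ i
    _ ≤ ‖V‖ * ‖(lp.single p j 1 : ℓ[p])‖ := V.le_opNorm _
    _ = ‖V‖ := by rw [lp.norm_single hp, norm_one, mul_one]

def diagonalSum (t : ℂ) (d : ℕ) (V : ℓ[p] →L[ℂ] ℓ[p]) : ℂ :=
  ∑' j, t ^ j * V (lp.single p j 1) (j + d)

variable {t : ℂ}

lemma hasSum_diagonalSum (ht : ‖t‖ < 1) (d : ℕ) (V : ℓ[p] →L[ℂ] ℓ[p]) :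
    HasSum (fun j => t ^ j * V (lp.single p j 1) (j + d)) (diagonalSum t d V) := by
  refine (Summable.of_norm_bounded ((summable_geometric_of_lt_one (norm_nonneg t) ht).mul_right ‖V‖)
    fun j => ?_).hasSum
  rw [norm_mul, norm_pow]
  exact mul_le_mul_of_nonneg_left (norm_apply_single_le V _ _) (by positivity)

lemma norm_diagonalSum_le (ht : ‖t‖ < 1) (d : ℕ) (V : ℓ[p] →L[ℂ] ℓ[p]) :
    ‖diagonalSum t d V‖ ≤ ‖V‖ / (1 - ‖t‖) := by
  rw [div_eq_inv_mul]
  refine tsum_of_norm_bounded ((hasSum_geometric_of_lt_one (norm_nonneg t) ht).mul_right ‖V‖)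
    fun j => ?_
  rw [norm_mul, norm_pow]
  exact mul_le_mul_of_nonneg_left (norm_apply_single_le V _ _) (by positivity)

lemma diagonalSum_sub (ht : ‖t‖ < 1) (d : ℕ) (V W : ℓ[p] →L[ℂ] ℓ[p]) :
    diagonalSum t d (V - W) = diagonalSum t d V - diagonalSum t d W := by
  have h := (hasSum_diagonalSum ht d V).sub (hasSum_diagonalSum ht d W)
  simp only [← mul_sub] at h
  exact h.tsum_eq

variable (p) in
def firstCoordProj : ℓ[p] →L[ℂ] ℓ[p] :=
  (lp.singleContinuousLinearMap ℂ _ p 0).comp (lp.evalCLM ℂ _ p 0)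

lemma isCompactOperator_smul_firstCoordProj (r : ℂ) :
    IsCompactOperator (r • firstCoordProj p) :=
  ((isCompactOperator_of_locallyCompactSpace_dom (lp.evalCLM ℂ _ p 0)).clm_comp
    (lp.singleContinuousLinearMap ℂ _ p 0)).smul r

lemma diagonalSum_smul_firstCoordProj (r : ℂ) : diagonalSum t 0 (r • firstCoordProj p) = r := by
  rw [diagonalSum, tsum_eq_single 0]
  · simp [firstCoordProj, lp.evalCLM, lp.single_apply]
  · intro j hj
    simp [firstCoordProj, lp.single_apply, hj]

section Shift

variable {B : ℓ[p] →L[ℂ] ℓ[p]} (hB : ∀ (x : ℓ[p]) (i : ℕ), B x i = x (i + 1))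
include hB

lemma apply_single_zero (a : ℂ) : B (lp.single p 0 a) = 0 := by
  apply lp.ext
  funext i
  simp [hB, lp.single_apply]

lemma apply_single_succ (j : ℕ) (a : ℂ) : B (lp.single p (j + 1) a) = lp.single p j a := by
  apply lp.ext
  funext i
  simp [hB, lp.single_apply, Pi.single_apply]

lemma diagonalSum_commutator (ht : ‖t‖ < 1) (c : ℂ) (d : ℕ) (V : ℓ[p] →L[ℂ] ℓ[p]) :
    diagonalSum t d ((c • B) ∘L V - V ∘L (c • B)) = c * (1 - t) * diagonalSum t (d + 1) V := by
  set F : ℕ → ℂ := fun j => t ^ j * V (lp.single p j 1) (j + (d + 1))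
  set G : ℕ → ℂ := fun j => t ^ j * V (B (lp.single p j 1)) (j + d)
  have hF : HasSum F (diagonalSum t (d + 1) V) := hasSum_diagonalSum ht (d + 1) V
  have hG_succ : (fun j => G (j + 1)) = fun j => t * F j := by
    funext j
    simp only [G, F, apply_single_succ hB]
    ring_nf
  have hG_zero : G 0 = 0 := by simp [G, apply_single_zero hB]
  have hG : HasSum G (t * diagonalSum t (d + 1) V) := by
    simpa [hG_zero] using HasSum.zero_add (f := G) (hG_succ ▸ hF.mul_left t)
  have hsummand : (fun j => t ^ j * ((c • B) ∘L V - V ∘L (c • B)) (lp.single p j 1) (j + d))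
      = fun j => c * F j - c * G j := by
    funext j
    simp only [F, G, sub_apply, comp_apply, smul_apply, map_smul, lp.coeFn_sub, lp.coeFn_smul,
      Pi.sub_apply, Pi.smul_apply, smul_eq_mul, hB]
    ring_nf
  rw [diagonalSum, hsummand, show c * (1 - t) * diagonalSum t (d + 1) V
    = c * diagonalSum t (d + 1) V - c * (t * diagonalSum t (d + 1) V) by ring]
  exact ((hF.mul_left c).sub (hG.mul_left c)).tsum_eq

lemma diagonalSum_iterate_commutator (ht : ‖t‖ < 1) (c : ℂ) (d n : ℕ) (V : ℓ[p] →L[ℂ] ℓ[p]) :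
    diagonalSum t d ((fun W => (c • B) ∘L W - W ∘L (c • B))^[n] V)
      = (c * (1 - t)) ^ n * diagonalSum t (d + n) V := by
  induction n generalizing V with
  | zero => simp
  | succ n ih =>
    rw [Function.iterate_succ_apply, ih, diagonalSum_commutator hB ht, pow_succ, ← add_assoc]
    ring

lemma norm_diagonalSum_iterate_commutator_le (ht : ‖t‖ < 1) {c : ℂ} (hc : ‖c * (1 - t)‖ ≤ 1)
    (n : ℕ) (V : ℓ[p] →L[ℂ] ℓ[p]) :
    ‖diagonalSum t 0 ((fun W => (c • B) ∘L W - W ∘L (c • B))^[n] V)‖ ≤ ‖V‖ / (1 - ‖t‖) := by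
  rw [diagonalSum_iterate_commutator hB ht, norm_mul, norm_pow]
  exact (mul_le_of_le_one_left (norm_nonneg _) (pow_le_one₀ (norm_nonneg _) hc)).trans
    (norm_diagonalSum_le ht _ V)

lemma one_le_norm_iterate_commutator_sub (ht : ‖t‖ < 1) {c : ℂ}
    (hc : ‖c * (1 - t)‖ ≤ 1) (A : ℓ[p] →L[ℂ] ℓ[p]) (n : ℕ) :
    1 ≤ ‖(fun W => (c • B) ∘L W - W ∘L (c • B))^[n] A
      - (((‖A‖ + 1) / (1 - ‖t‖) : ℝ) : ℂ) • firstCoordProj p‖ := by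
  set X := (fun W => (c • B) ∘L W - W ∘L (c • B))^[n] A
  set r : ℝ := (‖A‖ + 1) / (1 - ‖t‖)
  have h1t : 0 < 1 - ‖t‖ := sub_pos.mpr ht
  have hr : r ≤ ‖A‖ / (1 - ‖t‖) + ‖X - (r : ℂ) • firstCoordProj p‖ / (1 - ‖t‖) :=
    calc r = ‖diagonalSum t 0 ((r : ℂ) • firstCoordProj p)‖ := by
          rw [diagonalSum_smul_firstCoordProj, Complex.norm_real, Real.norm_of_nonneg (by positivity)]
      _ = ‖diagonalSum t 0 X - diagonalSum t 0 (X - (r : ℂ) • firstCoordProj p)‖ := by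
          rw [diagonalSum_sub ht, sub_sub_cancel]
      _ ≤ ‖diagonalSum t 0 X‖ + ‖diagonalSum t 0 (X - (r : ℂ) • firstCoordProj p)‖ :=
          norm_sub_le _ _
      _ ≤ _ := add_le_add (norm_diagonalSum_iterate_commutator_le hB ht hc n A)
          (norm_diagonalSum_le ht 0 _)
  rw [← add_div, div_le_div_iff_of_pos_right h1t] at hr
  linarith

end Shift

lemma exists_norm_lt_one_and_norm_mul_one_sub_le_one (c : ℂ) :
    ∃ t : ℂ, ‖t‖ < 1 ∧ ‖c * (1 - t)‖ ≤ 1 := by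
  refine ⟨((‖c‖ / (‖c‖ + 1) : ℝ) : ℂ), ?_, ?_⟩
  · rw [Complex.norm_real, Real.norm_of_nonneg (by positivity), div_lt_one (by positivity)]
    linarith
  · have h : (1 : ℂ) - ((‖c‖ / (‖c‖ + 1) : ℝ) : ℂ) = ((1 / (‖c‖ + 1) : ℝ) : ℂ) := by
      rw [← Complex.ofReal_one, ← Complex.ofReal_sub]
      congr 1
      field_simp
      ring
    rw [h, norm_mul, Complex.norm_real, Real.norm_of_nonneg (by positivity), mul_one_div,
      div_le_one (by positivity)]
    linarith

end BackwardShiftCommutator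

end

open BackwardShiftCommutator in
/-- Main theorem: the commutator map `Δ_{cB} : S ↦ (cB)S − S(cB)` induced on the compact
operators `K(ℓ²)` by a scalar multiple `cB` of the backward shift `B` on `ℓ²(ℕ)` is not
hypercyclic, for any constant `c ∈ ℂ`: no compact operator `A` has a `Δ_{cB}`-orbit that
is dense (in operator norm) in the space of compact operators. -/
theorem stmt_18 (B : lp (fun _ : ℕ => ℂ) 2 →L[ℂ] lp (fun _ : ℕ => ℂ) 2)
    (hB : ∀ (x : lp (fun _ : ℕ => ℂ) 2) (i : ℕ),
      (B x : ∀ _ : ℕ, ℂ) i = (x : ∀ _ : ℕ, ℂ) (i + 1))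
    (c : ℂ) :
    ¬ ∃ A : lp (fun _ : ℕ => ℂ) 2 →L[ℂ] lp (fun _ : ℕ => ℂ) 2,
        IsCompactOperator A ∧
        ∀ S : lp (fun _ : ℕ => ℂ) 2 →L[ℂ] lp (fun _ : ℕ => ℂ) 2,
          IsCompactOperator S → ∀ ε : ℝ, 0 < ε →
            ∃ n : ℕ, ‖(fun V => (c • B) ∘L V - V ∘L (c • B))^[n] A - S‖ < ε := by
  rintro ⟨A, -, hA⟩
  obtain ⟨t, ht, hc⟩ := exists_norm_lt_one_and_norm_mul_one_sub_le_one c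
  obtain ⟨n, hn⟩ := hA ((((‖A‖ + 1) / (1 - ‖t‖) : ℝ) : ℂ) • firstCoordProj 2)
    (isCompactOperator_smul_firstCoordProj _) 1 one_pos
  exact hn.not_ge (one_le_norm_iterate_commutator_sub hB ht hc A n)
end
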